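/- Let Γ be a finite set containing two distinct points a and b, and let λ : Γ → [0, ∞) satisfy λ(a) = λ(b) and |λ| := Σ_{α∈Γ} λ(α) > 0. Let Ψ be a random element of ℤ≥0^Γ with E[Σ_{α∈Γ} Ψ(α)] < ∞ satisfying E[B_0 g(Ψ)] = 0 for every bounded function g : ℤ≥0^Γ → ℝ, and suppose P[Ψ = δ_a] = P[Ψ = δ_b]. Then the total number of points |Ψ| = Σ_{α∈Γ} Ψ(α) satisfies d_TV(L(|Ψ|), Po(|λ|)) ≤ P[Ψ = δ_a] · (1 − e^{−|λ|}) / |λ|. -/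

import Mathlib

open MeasureTheory

/-- `Po(ν)(A) = Σ_{j ∈ A} e^{−ν} ν^j / j!`. -/
noncomputable def poissonProb (nu : ℝ) (A : Set ℕ) : ℝ :=
  ∑' j : ℕ, Set.indicator A (fun j => Real.exp (-nu) * nu ^ j / (Nat.factorial j : ℝ)) j

/-- The configuration with exactly one point at `a`. -/
def deltaAt {Γ : Type*} [DecidableEq Γ] (a : Γ) : Γ → ℕ := fun x => if x = a then 1 else 0

/-- The Poisson point process Stein operator
`A g(ξ) = Σ_α λ(α)[g(ξ+δ_α) − g(ξ)] + Σ_α ξ(α)[g(ξ−δ_α) − g(ξ)]`. -/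
noncomputable def ppSteinA {Γ : Type*} [Fintype Γ] [DecidableEq Γ] (lam : Γ → ℝ)
    (g : (Γ → ℕ) → ℝ) (ξ : Γ → ℕ) : ℝ :=
  (∑ α, lam α * (g (ξ + deltaAt α) - g ξ)) + ∑ α, (ξ α : ℝ) * (g (ξ - deltaAt α) - g ξ)

/-- The perturbed Poisson point process Stein operator `B_0`, perturbed at the
configurations `δ_a` and `δ_b`. -/
noncomputable def ppSteinB {Γ : Type*} [Fintype Γ] [DecidableEq Γ] (lam : Γ → ℝ) (a b : Γ)
    (g : (Γ → ℕ) → ℝ) (ξ : Γ → ℕ) : ℝ :=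
  ppSteinA lam g ξ
    + (1 / 2) * (if ξ = deltaAt a then (1 : ℝ) else 0) * (g (ξ + deltaAt b) - g ξ)
    + (1 / 2) * (if ξ = deltaAt b then (1 : ℝ) else 0) * (g (ξ + deltaAt a) - g ξ)
    + (1 / 2) * (if ξ = deltaAt a then (1 : ℝ) else 0) * (g (ξ - deltaAt a) - g ξ)
    + (1 / 2) * (if ξ = deltaAt b then (1 : ℝ) else 0) * (g (ξ - deltaAt b) - g ξ)

/-!
Test the Stein identity against functions of the total count, `g(ξ) = φ(|ξ|)`. On these, `A` acts
as the immigration–death generator `ν (φ(w + 1) − φ(w)) + w (φ(w − 1) − φ(w))` of `Po(ν)`,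
`ν = |λ|`, while each perturbation at `δ_a`, `δ_b` contributes `(φ(2) − 2 φ(1) + φ(0)) / 2`.
Taking for `φ` the partial sums of the Chen–Stein solution `h` for the set `A` (held constant
beyond a level `N` so that `g` is bounded, then `N → ∞` by dominated convergence) gives
`P(|Ψ| ∈ A) − Po(ν)(A) = −P[Ψ = δ_a] (h(2) − h(1))`, and `h(1)`, `h(2)` are explicit enough to
check `|h(2) − h(1)| ≤ (1 − e^{−ν}) / ν` by hand.
-/

open Finset Real
open scoped Nat

noncomputable def poissonWeight (ν : ℝ) (k : ℕ) : ℝ := exp (-ν) * ν ^ k / k !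

section PoissonWeight

variable {ν : ℝ}

lemma poissonWeight_pos (hν : 0 < ν) (k : ℕ) : 0 < poissonWeight ν k := by
  unfold poissonWeight; positivity

lemma poissonWeight_nonneg (hν : 0 ≤ ν) (k : ℕ) : 0 ≤ poissonWeight ν k := by
  unfold poissonWeight; positivity

lemma poissonWeight_zero : poissonWeight ν 0 = exp (-ν) := by
  simp [poissonWeight]

lemma poissonWeight_one : poissonWeight ν 1 = ν * exp (-ν) := by
  simp [poissonWeight, mul_comm]

lemma succ_mul_poissonWeight_succ (k : ℕ) :
    (k + 1) * poissonWeight ν (k + 1) = ν * poissonWeight ν k := by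
  simp only [poissonWeight, Nat.factorial_succ, Nat.cast_mul, pow_succ]
  field_simp
  push_cast
  ring

lemma hasSum_poissonWeight (ν : ℝ) : HasSum (poissonWeight ν) 1 := by
  have h := (NormedSpace.expSeries_div_hasSum_exp ν).mul_left (exp (-ν))
  rw [← exp_eq_exp_ℝ, ← exp_add, neg_add_cancel, exp_zero] at h
  exact h.congr_fun fun k => mul_div_assoc _ _ _

lemma poissonWeight_add_succ_le (hν : 0 ≤ ν) (j m : ℕ) :
    poissonWeight ν (m + (j + 1)) ≤ ν * poissonWeight ν j * (ν ^ m / m !) := by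
  have hfac : (j ! * m ! : ℝ) ≤ (m + (j + 1))! := by
    exact_mod_cast (Nat.le_of_dvd (Nat.factorial_pos _)
      (Nat.factorial_mul_factorial_dvd_factorial_add j m)).trans (Nat.factorial_le (by omega))
  calc poissonWeight ν (m + (j + 1)) = exp (-ν) * ν ^ (m + (j + 1)) / (m + (j + 1))! := rfl
    _ ≤ exp (-ν) * ν ^ (m + (j + 1)) / (j ! * m !) := by gcongr
    _ = ν * poissonWeight ν j * (ν ^ m / m !) := by
      rw [poissonWeight]; ring

lemma poissonProb_eq_tsum (A : Set ℕ) :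
    poissonProb ν A = ∑' k, A.indicator 1 k * poissonWeight ν k := by
  unfold poissonProb
  congr 1; funext k
  rw [← Set.indicator_mul_left]
  simp only [Pi.one_apply, one_mul, poissonWeight]

end PoissonWeight

lemma indicator_one_mem_Icc {α : Type*} (s : Set α) (x : α) :
    s.indicator (1 : α → ℝ) x ∈ Set.Icc 0 1 := by
  by_cases hx : x ∈ s <;> simp [hx]

section SteinSolution

variable {ν : ℝ} (A : Set ℕ)

lemma hasSum_indicator_mul_poissonWeight :
    HasSum (fun k => A.indicator 1 k * poissonWeight ν k) (poissonProb ν A) := by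
  rw [poissonProb_eq_tsum]
  refine Summable.hasSum (((hasSum_poissonWeight ν).summable.indicator A).congr fun k => ?_)
  by_cases hk : k ∈ A <;> simp [hk]

lemma sum_range_le_poissonProb (hν : 0 ≤ ν) (n : ℕ) :
    ∑ k ∈ range n, A.indicator 1 k * poissonWeight ν k ≤ poissonProb ν A :=
  sum_le_hasSum _ (fun k _ => mul_nonneg (indicator_one_mem_Icc A k).1 (poissonWeight_nonneg hν k))
    (hasSum_indicator_mul_poissonWeight A)

lemma sum_range_le_one_sub_poissonProb (hν : 0 ≤ ν) (n : ℕ) :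
    ∑ k ∈ range n, (1 - A.indicator 1 k) * poissonWeight ν k ≤ 1 - poissonProb ν A := by
  refine sum_le_hasSum _ (fun k _ => ?_)
    (((hasSum_poissonWeight ν).sub (hasSum_indicator_mul_poissonWeight A)).congr_fun
      fun k => one_sub_mul _ _)
  exact mul_nonneg (sub_nonneg.2 (indicator_one_mem_Icc A k).2) (poissonWeight_nonneg hν k)

lemma abs_indicator_sub_poissonProb_le (hν : 0 ≤ ν) (k : ℕ) :
    |A.indicator 1 k - poissonProb ν A| ≤ 1 := by
  have hq := sum_range_le_poissonProb A hν 0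
  have hq' := sum_range_le_one_sub_poissonProb A hν 0
  have hk := indicator_one_mem_Icc A k
  rw [sum_range_zero] at hq hq'
  exact abs_le.2 ⟨by linarith [hk.1], by linarith [hk.2]⟩

lemma hasSum_centered_poissonWeight :
    HasSum (fun k => (A.indicator 1 k - poissonProb ν A) * poissonWeight ν k) 0 := by
  have h := (hasSum_indicator_mul_poissonWeight (ν := ν) A).sub
    ((hasSum_poissonWeight ν).mul_left (poissonProb ν A))
  rw [mul_one, sub_self] at h
  exact h.congr_fun fun k => sub_mul _ _ _

/-- The Chen–Stein solution of `ν h(w + 1) − w h(w) = 1_A(w) − Po(ν)(A)`. -/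
noncomputable def poissonSteinSol (ν : ℝ) (A : Set ℕ) : ℕ → ℝ
  | 0 => 0
  | j + 1 => (∑ k ∈ range (j + 1), (A.indicator 1 k - poissonProb ν A) * poissonWeight ν k) /
      (ν * poissonWeight ν j)

lemma poissonSteinSol_stein_eq (hν : 0 < ν) (w : ℕ) :
    ν * poissonSteinSol ν A (w + 1) - w * poissonSteinSol ν A w =
      A.indicator 1 w - poissonProb ν A := by
  have hp := poissonWeight_pos hν
  cases w with
  | zero =>
    simp only [poissonSteinSol, zero_add, sum_range_one, CharP.cast_eq_zero, zero_mul, sub_zero]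
    field_simp [(hp 0).ne']
  | succ j =>
    have hrec := succ_mul_poissonWeight_succ (ν := ν) j
    simp only [poissonSteinSol, sum_range_succ _ (j + 1)]
    field_simp [(hp j).ne', (hp (j + 1)).ne']
    push_cast
    linear_combination
      -(∑ k ∈ range (j + 1), (A.indicator 1 k - poissonProb ν A) * poissonWeight ν k) * hrec

lemma abs_poissonSteinSol_le (hν : 0 < ν) (j : ℕ) : |poissonSteinSol ν A j| ≤ exp ν := by
  cases j with
  | zero => simp [poissonSteinSol, (exp_pos ν).le]
  | succ j =>
    set c := fun k => (A.indicator 1 k - poissonProb ν A) * poissonWeight ν k with hc_def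
    have hc : HasSum c 0 := hasSum_centered_poissonWeight A
    have hhead : ∑ k ∈ range (j + 1), c k = -∑' m, c (m + (j + 1)) := by
      have := hc.summable.sum_add_tsum_nat_add (j + 1)
      rw [hc.tsum_eq] at this
      linarith
    have htail : |∑' m, c (m + (j + 1))| ≤ ν * poissonWeight ν j * exp ν := by
      have hexp : HasSum (fun m : ℕ => ν ^ m / m !) (exp ν) := by
        rw [exp_eq_exp_ℝ]; exact NormedSpace.expSeries_div_hasSum_exp ν
      rw [← Real.norm_eq_abs]
      refine tsum_of_norm_bounded (hexp.mul_left _) fun m => ?_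
      calc ‖c (m + (j + 1))‖ ≤ poissonWeight ν (m + (j + 1)) := by
            rw [hc_def, Real.norm_eq_abs, abs_mul, abs_of_pos (poissonWeight_pos hν _)]
            exact mul_le_of_le_one_left (poissonWeight_pos hν _).le
              (abs_indicator_sub_poissonProb_le A hν.le _)
        _ ≤ ν * poissonWeight ν j * (ν ^ m / m !) := poissonWeight_add_succ_le hν.le j m
    have hpos : 0 < ν * poissonWeight ν j := mul_pos hν (poissonWeight_pos hν j)
    simp only [poissonSteinSol]
    rw [hhead, abs_div, abs_neg, abs_of_pos hpos, div_le_iff₀ hpos]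
    linarith

lemma abs_poissonSteinSol_two_sub_one_le (hν : 0 < ν) :
    |poissonSteinSol ν A 2 - poissonSteinSol ν A 1| ≤ (1 - exp (-ν)) / ν := by
  have h1 : poissonSteinSol ν A 1 = (A.indicator 1 0 - poissonProb ν A) / ν := by
    simp only [poissonSteinSol, zero_add, sum_range_one]
    field_simp [(poissonWeight_pos hν 0).ne']
  have h2 : poissonSteinSol ν A 2 = (A.indicator 1 0 - poissonProb ν A +
      ν * (A.indicator 1 1 - poissonProb ν A)) / ν ^ 2 := by
    simp only [poissonSteinSol, sum_range_succ, sum_range_zero, zero_add, poissonWeight_zero,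
      poissonWeight_one]
    field_simp [(exp_pos (-ν)).ne']
  have hlow := sum_range_le_poissonProb A hν.le 2
  have hupp := sum_range_le_one_sub_poissonProb A hν.le 2
  simp only [sum_range_succ, sum_range_zero, zero_add, poissonWeight_zero,
    poissonWeight_one] at hlow hupp
  have hE : 1 - ν ≤ exp (-ν) := by linarith [add_one_le_exp (-ν)]
  have hE1 : exp (-ν) ≤ 1 := exp_le_one_iff.2 (by linarith)
  have hnum : |(1 - ν) * A.indicator 1 0 + ν * A.indicator 1 1 - poissonProb ν A| ≤
      ν * (1 - exp (-ν)) := by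
    rw [abs_le]
    by_cases h0 : 0 ∈ A <;> by_cases h1 : 1 ∈ A <;> simp [h0, h1] at hlow hupp ⊢ <;>
      constructor <;> nlinarith
  have hdiff : poissonSteinSol ν A 2 - poissonSteinSol ν A 1 =
      ((1 - ν) * A.indicator 1 0 + ν * A.indicator 1 1 - poissonProb ν A) / ν ^ 2 := by
    rw [h1, h2]; field_simp; ring
  rw [hdiff, abs_div, abs_of_pos (pow_pos hν 2), div_le_div_iff₀ (pow_pos hν 2) hν]
  nlinarith

end SteinSolution

section TruncatedTestFunction

noncomputable def steinTestFn (ν : ℝ) (A : Set ℕ) (N j : ℕ) : ℝ :=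
  ∑ i ∈ range (min j N), poissonSteinSol ν A (i + 1)

noncomputable def steinResidual (ν : ℝ) (A : Set ℕ) (N w : ℕ) : ℝ :=
  if w < N then A.indicator 1 w - poissonProb ν A
  else if w = N then -(N * poissonSteinSol ν A N) else 0

variable {ν : ℝ} (A : Set ℕ) (N : ℕ)

lemma steinTestFn_succ_sub (w : ℕ) :
    steinTestFn ν A N (w + 1) - steinTestFn ν A N w =
      if w < N then poissonSteinSol ν A (w + 1) else 0 := by
  unfold steinTestFn
  split_ifs with hw
  · rw [min_eq_left hw, min_eq_left hw.le, sum_range_succ, add_sub_cancel_left]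
  · rw [min_eq_right (by omega), min_eq_right (by omega), sub_self]

lemma steinTestFn_stein_eq (hν : 0 < ν) (w : ℕ) :
    ν * (steinTestFn ν A N (w + 1) - steinTestFn ν A N w) +
        w * (steinTestFn ν A N (w - 1) - steinTestFn ν A N w) = steinResidual ν A N w := by
  have hstein := poissonSteinSol_stein_eq A hν w
  rw [steinTestFn_succ_sub, steinResidual]
  cases w with
  | zero =>
    simp only [CharP.cast_eq_zero, zero_mul, sub_zero, add_zero] at hstein ⊢
    split_ifs <;> first | omega | simp_all
  | succ v =>
    rw [Nat.add_sub_cancel, ← neg_sub, steinTestFn_succ_sub]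
    split_ifs <;> first | omega | (subst_vars; push_cast at hstein ⊢; linarith)

lemma abs_steinTestFn_le (hν : 0 < ν) (j : ℕ) : |steinTestFn ν A N j| ≤ N * exp ν := by
  calc |steinTestFn ν A N j| ≤ ∑ i ∈ range (min j N), |poissonSteinSol ν A (i + 1)| :=
        abs_sum_le_sum_abs _ _
    _ ≤ ∑ i ∈ range (min j N), exp ν := sum_le_sum fun i _ => abs_poissonSteinSol_le A hν _
    _ ≤ N * exp ν := by
        rw [sum_const, card_range, nsmul_eq_mul]
        gcongr
        exact_mod_cast min_le_right j N

lemma abs_steinResidual_le (hν : 0 < ν) (w : ℕ) :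
    |steinResidual ν A N w| ≤ 1 + exp ν * w := by
  have := abs_indicator_sub_poissonProb_le A hν.le w
  have : 0 ≤ exp ν * w := by positivity
  unfold steinResidual
  split_ifs with hlt heq
  · linarith
  · subst heq
    rw [abs_neg, abs_mul, Nat.abs_cast]
    nlinarith [abs_poissonSteinSol_le A hν w, abs_nonneg (poissonSteinSol ν A w)]
  · rw [abs_zero]; linarith

end TruncatedTestFunction

section Configurations

variable {Γ : Type*} [Fintype Γ] [DecidableEq Γ]

lemma sum_deltaAt (β : Γ) : ∑ α, deltaAt β α = 1 := by
  simp [deltaAt]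

lemma sum_add_deltaAt (ξ : Γ → ℕ) (β : Γ) : ∑ α, (ξ + deltaAt β) α = ∑ α, ξ α + 1 := by
  rw [← sum_deltaAt β, ← sum_add_distrib]
  rfl

lemma sum_sub_deltaAt (ξ : Γ → ℕ) {β : Γ} (hβ : ξ β ≠ 0) :
    ∑ α, (ξ - deltaAt β) α = ∑ α, ξ α - 1 := by
  have h : ξ - deltaAt β + deltaAt β = ξ := by
    funext α
    by_cases hα : α = β <;> simp [deltaAt, hα]
    omega
  have := sum_add_deltaAt (ξ - deltaAt β) β
  rw [h] at this
  omega

lemma ppSteinA_comp_sum (lam : Γ → ℝ) (f : ℕ → ℝ) (ξ : Γ → ℕ) :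
    ppSteinA lam (fun ζ => f (∑ α, ζ α)) ξ =
      (∑ α, lam α) * (f (∑ α, ξ α + 1) - f (∑ α, ξ α)) +
        (∑ α, ξ α : ℕ) * (f (∑ α, ξ α - 1) - f (∑ α, ξ α)) := by
  have hdeath (β : Γ) : (ξ β : ℝ) * (f (∑ α, (ξ - deltaAt β) α) - f (∑ α, ξ α)) =
      ξ β * (f (∑ α, ξ α - 1) - f (∑ α, ξ α)) := by
    by_cases hβ : ξ β = 0
    · simp [hβ]
    · rw [sum_sub_deltaAt ξ hβ]
  simp only [ppSteinA, sum_add_deltaAt, hdeath, ← sum_mul, Nat.cast_sum]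

lemma ppSteinB_comp_sum (lam : Γ → ℝ) (a b : Γ) (f : ℕ → ℝ) (ξ : Γ → ℕ) :
    ppSteinB lam a b (fun ζ => f (∑ α, ζ α)) ξ =
      ppSteinA lam (fun ζ => f (∑ α, ζ α)) ξ +
        ((if ξ = deltaAt a then 1 else 0) + (if ξ = deltaAt b then 1 else 0)) *
          (f 2 - 2 * f 1 + f 0) / 2 := by
  have h2 {c : Γ} (h : ξ = deltaAt c) (d : Γ) : ∑ α, (ξ + deltaAt d) α = 2 := by
    rw [sum_add_deltaAt, h, sum_deltaAt]
  have h1 {c : Γ} (h : ξ = deltaAt c) : ∑ α, ξ α = 1 := by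
    rw [h, sum_deltaAt]
  have h0 {c : Γ} (h : ξ = deltaAt c) : ∑ α, (ξ - deltaAt c) α = 0 := by
    simp [h]
  unfold ppSteinB
  split_ifs with ha hb hb
  · simp only [h2 ha, h1 ha, h0 ha, h0 hb]; ring
  · simp only [h2 ha, h1 ha, h0 ha]; ring
  · simp only [h2 hb, h1 hb, h0 hb]; ring
  · ring

end Configurations

lemma ppSteinB_steinTestFn {Γ : Type*} [Fintype Γ] [DecidableEq Γ] (lam : Γ → ℝ) (a b : Γ)
    (hν : 0 < ∑ α, lam α) (A : Set ℕ) {N : ℕ} (hN : 2 ≤ N) (ξ : Γ → ℕ) :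
    ppSteinB lam a b (fun ζ => steinTestFn (∑ α, lam α) A N (∑ α, ζ α)) ξ =
      steinResidual (∑ α, lam α) A N (∑ α, ξ α) +
        ((if ξ = deltaAt a then 1 else 0) + (if ξ = deltaAt b then 1 else 0)) *
          (poissonSteinSol (∑ α, lam α) A 2 - poissonSteinSol (∑ α, lam α) A 1) / 2 := by
  have h1 := steinTestFn_succ_sub (ν := ∑ α, lam α) A N 1
  have h0 := steinTestFn_succ_sub (ν := ∑ α, lam α) A N 0
  rw [if_pos (by omega)] at h0 h1
  simp only [zero_add, one_add_one_eq_two] at h0 h1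
  rw [ppSteinB_comp_sum, ppSteinA_comp_sum, steinTestFn_stein_eq A N hν]
  linear_combination ((if ξ = deltaAt a then 1 else 0) + (if ξ = deltaAt b then 1 else 0)) *
    (h1 - h0) / 2

lemma measurable_count {Ω Γ : Type*} [MeasurableSpace Ω] [Fintype Γ] {Ψ : Ω → Γ → ℕ}
    (hΨ : Measurable Ψ) : Measurable fun ω => ∑ α, Ψ ω α := by
  fun_prop

section Probability

open Filter Topology

variable {Ω : Type*} [MeasurableSpace Ω] (P : Measure Ω) [IsProbabilityMeasure P]
  {Γ : Type*} [Fintype Γ] {Ψ : Ω → Γ → ℕ}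

lemma integrable_steinResidual_count {ν : ℝ} (hν : 0 < ν) (hΨ : Measurable Ψ)
    (hint : Integrable (fun ω => ∑ α, (Ψ ω α : ℝ)) P) (A : Set ℕ) (N : ℕ) :
    Integrable (fun ω => steinResidual ν A N (∑ α, Ψ ω α)) P := by
  refine ((integrable_const 1).add (hint.const_mul (exp ν))).mono' ?_ (ae_of_all _ fun ω => ?_)
  · exact ((measurable_from_nat (f := steinResidual ν A N)).comp
      (measurable_count hΨ)).aestronglyMeasurable
  · simpa only [Real.norm_eq_abs, Pi.add_apply, Nat.cast_sum] using
      abs_steinResidual_le A N hν (∑ α, Ψ ω α)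

lemma tendsto_integral_steinResidual_count {ν : ℝ} (hν : 0 < ν) (hΨ : Measurable Ψ)
    (hint : Integrable (fun ω => ∑ α, (Ψ ω α : ℝ)) P) (A : Set ℕ) :
    Tendsto (fun N => ∫ ω, steinResidual ν A N (∑ α, Ψ ω α) ∂P) atTop
      (𝓝 (P.real {ω | ∑ α, Ψ ω α ∈ A} - poissonProb ν A)) := by
  have hW := measurable_count hΨ
  have hind : (fun ω => A.indicator (1 : ℕ → ℝ) (∑ α, Ψ ω α)) =
      {ω | ∑ α, Ψ ω α ∈ A}.indicator 1 := by
    funext ω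
    by_cases h : ∑ α, Ψ ω α ∈ A <;> simp [h]
  have hS : MeasurableSet {ω | ∑ α, Ψ ω α ∈ A} := hW (MeasurableSet.of_discrete)
  have hlimit : ∫ ω, (A.indicator 1 (∑ α, Ψ ω α) - poissonProb ν A) ∂P =
      P.real {ω | ∑ α, Ψ ω α ∈ A} - poissonProb ν A := by
    rw [integral_sub (by rw [hind]; exact (integrable_const 1).indicator hS) (integrable_const _),
      hind, integral_indicator_one hS, integral_const, probReal_univ, one_smul]
  rw [← hlimit]
  refine tendsto_integral_of_dominated_convergence (fun ω => 1 + exp ν * ∑ α, (Ψ ω α : ℝ))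
    (fun N => ((measurable_from_nat (f := steinResidual ν A N)).comp hW).aestronglyMeasurable)
    ((integrable_const 1).add (hint.const_mul _)) (fun N => ae_of_all _ fun ω => ?_)
    (ae_of_all _ fun ω => ?_)
  · simpa only [Real.norm_eq_abs, Nat.cast_sum] using abs_steinResidual_le A N hν (∑ α, Ψ ω α)
  · refine tendsto_const_nhds.congr' (eventually_atTop.2 ⟨∑ α, Ψ ω α + 1, fun N hN => ?_⟩)
    simp only [steinResidual, if_pos (show ∑ α, Ψ ω α < N by omega)]

lemma integral_steinResidual_count_eq [DecidableEq Γ] (lam : Γ → ℝ) (a b : Γ)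
    (hν : 0 < ∑ α, lam α) (hΨ : Measurable Ψ) (hint : Integrable (fun ω => ∑ α, (Ψ ω α : ℝ)) P)
    (hstein : ∀ g : (Γ → ℕ) → ℝ, (∃ C : ℝ, ∀ ξ, |g ξ| ≤ C) →
      ∫ ω, ppSteinB lam a b g (Ψ ω) ∂P = 0)
    (A : Set ℕ) {N : ℕ} (hN : 2 ≤ N) :
    ∫ ω, steinResidual (∑ α, lam α) A N (∑ α, Ψ ω α) ∂P =
      -((P.real {ω | Ψ ω = deltaAt a} + P.real {ω | Ψ ω = deltaAt b}) *
        (poissonSteinSol (∑ α, lam α) A 2 - poissonSteinSol (∑ α, lam α) A 1) / 2) := by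
  have hite (c : Γ) : (fun ω => if Ψ ω = deltaAt c then (1 : ℝ) else 0) =
      {ω | Ψ ω = deltaAt c}.indicator 1 := by
    funext ω
    simp [Set.indicator_apply]
  have hS (c : Γ) : MeasurableSet {ω | Ψ ω = deltaAt c} := hΨ (measurableSet_singleton _)
  have hI (c : Γ) : Integrable (fun ω => if Ψ ω = deltaAt c then (1 : ℝ) else 0) P := by
    rw [hite]
    exact (integrable_const 1).indicator (hS c)
  have hB := hstein (fun ξ => steinTestFn (∑ α, lam α) A N (∑ α, ξ α))
    ⟨N * exp (∑ α, lam α), fun ξ => abs_steinTestFn_le A N hν _⟩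
  simp only [ppSteinB_steinTestFn lam a b hν A hN] at hB
  rw [integral_add (integrable_steinResidual_count P hν hΨ hint A N)
    ((((hI a).fun_add (hI b)).mul_const _).div_const _), integral_div, integral_mul_const,
    integral_add (hI a) (hI b), hite a, hite b, integral_indicator_one (hS a),
    integral_indicator_one (hS b)] at hB
  linarith

end Probability

theorem pp_perturbed_total_count_dTV_general
    {Ω : Type*} [MeasurableSpace Ω] (P : Measure Ω) [IsProbabilityMeasure P]
    {Γ : Type*} [Fintype Γ] [DecidableEq Γ] (a b : Γ)
    (lam : Γ → ℝ)
    (hlampos : 0 < ∑ α, lam α)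
    (Ψ : Ω → Γ → ℕ) (hΨ : Measurable Ψ)
    (hint : Integrable (fun ω => ∑ α, (Ψ ω α : ℝ)) P)
    (hstein : ∀ g : (Γ → ℕ) → ℝ, (∃ C : ℝ, ∀ ξ, |g ξ| ≤ C) →
      ∫ ω, ppSteinB lam a b g (Ψ ω) ∂P = 0)
    (hsym : P {ω | Ψ ω = deltaAt a} = P {ω | Ψ ω = deltaAt b}) :
    (⨆ A : Set ℕ, |(P {ω | (∑ α, Ψ ω α) ∈ A}).toReal - poissonProb (∑ α, lam α) A|) ≤
      (P {ω | Ψ ω = deltaAt a}).toReal *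
        (1 - Real.exp (-(∑ α, lam α))) / (∑ α, lam α) := by
  refine ciSup_le fun A => ?_
  have hdev : P.real {ω | ∑ α, Ψ ω α ∈ A} - poissonProb (∑ α, lam α) A =
      -(P.real {ω | Ψ ω = deltaAt a} *
        (poissonSteinSol (∑ α, lam α) A 2 - poissonSteinSol (∑ α, lam α) A 1)) := by
    refine tendsto_nhds_unique (tendsto_integral_steinResidual_count P hlampos hΨ hint A)
      (tendsto_const_nhds.congr' (Filter.eventually_atTop.2 ⟨2, fun N hN => ?_⟩))
    dsimp only
    rw [integral_steinResidual_count_eq P lam a b hlampos hΨ hint hstein A hN, measureReal_def,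
      measureReal_def, hsym]
    ring
  rw [← measureReal_def, hdev, abs_neg, abs_mul, abs_of_nonneg measureReal_nonneg,
    mul_div_assoc, ← measureReal_def]
  exact mul_le_mul_of_nonneg_left (abs_poissonSteinSol_two_sub_one_le A hlampos)
    measureReal_nonneg

/-- In the setting of the perturbed Poisson point process with
`|λ| = Σ_α λ(α) > 0`, the total number of points `|Ψ| = Σ_α Ψ(α)` satisfies
`d_TV(L(|Ψ|), Po(|λ|)) ≤ P[Ψ = δ_a] (1 − e^{−|λ|}) / |λ|`. -/
theorem pp_perturbed_total_count_dTV
    {Ω : Type*} [MeasurableSpace Ω] (P : Measure Ω) [IsProbabilityMeasure P]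
    {Γ : Type*} [Fintype Γ] [DecidableEq Γ] (a b : Γ) (hab : a ≠ b)
    (lam : Γ → ℝ) (hlam : ∀ α, 0 ≤ lam α) (hlamab : lam a = lam b)
    (hlampos : 0 < ∑ α, lam α)
    (Ψ : Ω → Γ → ℕ) (hΨ : Measurable Ψ)
    (hint : Integrable (fun ω => ∑ α, (Ψ ω α : ℝ)) P)
    (hstein : ∀ g : (Γ → ℕ) → ℝ, (∃ C : ℝ, ∀ ξ, |g ξ| ≤ C) →
      ∫ ω, ppSteinB lam a b g (Ψ ω) ∂P = 0)
    (hsym : P {ω | Ψ ω = deltaAt a} = P {ω | Ψ ω = deltaAt b}) :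
    (⨆ A : Set ℕ, |(P {ω | (∑ α, Ψ ω α) ∈ A}).toReal - poissonProb (∑ α, lam α) A|) ≤
      (P {ω | Ψ ω = deltaAt a}).toReal *
        (1 - Real.exp (-(∑ α, lam α))) / (∑ α, lam α) :=
  pp_perturbed_total_count_dTV_general P a b lam hlampos Ψ hΨ hint hstein hsym
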